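/- arXiv:1903.11867 — 4 statements merged into one kernel-verified Lean document; each statement's English description precedes it below -/
import Mathlib

section
/- Let α > 0, C, C₁, C₂ > 0, and let Z ≥ 0 be a random variable with P(0 < Z ≤ t) ≤ C t^α for all t > 0. Let W be a nonnegative random variable (possibly dependent on Z) such that for every t > 0, P(W ≥ t | Z) ≤ C₁ exp(−C₂ a t²) almost surely, where a > 0. Then E[Z · 1{Z ≤ W}] ≤ C̃ a^{−(1+α)/2} for a constant C̃ depending only on α, C, C₁, C₂. (Peeling argument: split on the events {2^{p−1}δ < Z ≤ 2^p δ} with δ = a^{−1/2}.) -/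
/-!
Peeling with `δ = a^(-1/2)`. On `{Z ≤ W}` either `0 < Z ≤ δ`, an event of probability at most
`C δ^α` on which `Z ≤ δ`, or `Z` lies in a dyadic shell `[2^q δ, 2^(q+1) δ)`. On the `q`-th shell
`Z ≤ 2^(q+1) δ`, the shell has probability at most `C (2^(q+1) δ)^α`, and `W ≥ Z ≥ 2^q δ` has
conditional probability at most `C₁ exp(-C₂ a (2^q δ)^2) = C₁ exp(-C₂ 4^q)`. Summing,
`E[Z 1{Z ≤ W}] ≤ C δ^(1+α) (1 + C₁ ∑_q 2^((q+1)(1+α)) exp(-C₂ 4^q))`, and the series converges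
because the doubly exponential decay beats the geometric growth.
-/

open MeasureTheory Filter Set Real
open scoped ENNReal Topology

lemma summable_pow_mul_exp_neg_mul_four_pow (r : ℝ) {c : ℝ} (hc : 0 < c) :
    Summable fun n : ℕ ↦ r ^ n * exp (-c * 4 ^ n) := by
  refine summable_of_ratio_norm_eventually_le (r := 1 / 2) (by norm_num) ?_
  have hratio : Tendsto (fun n : ℕ ↦ |r| * exp (-(3 * c * 4 ^ n))) atTop (𝓝 0) := by
    have h4 := (tendsto_pow_atTop_atTop_of_one_lt (by norm_num : (1 : ℝ) < 4)).const_mul_atTop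
      (by positivity : 0 < 3 * c)
    simpa using (tendsto_exp_atBot.comp (tendsto_neg_atTop_atBot.comp h4)).const_mul |r|
  filter_upwards [hratio.eventually (ge_mem_nhds (by norm_num : (0 : ℝ) < 1 / 2))] with n hn
  have hstep : r ^ (n + 1) * exp (-c * 4 ^ (n + 1)) =
      (r * exp (-(3 * c * 4 ^ n))) * (r ^ n * exp (-c * 4 ^ n)) := by
    rw [pow_succ, pow_succ, show -c * (4 ^ n * 4) = -(3 * c * 4 ^ n) + -c * 4 ^ n by ring, exp_add]
    ring
  rw [hstep, norm_mul _ (r ^ n * _), Real.norm_eq_abs (r * _), abs_mul, abs_exp]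
  gcongr

noncomputable def dyadicPeelingSum (α c : ℝ) : ℝ :=
  ∑' q : ℕ, ((2 : ℝ) ^ (1 + α)) ^ (q + 1) * exp (-c * 4 ^ q)

lemma summable_dyadicPeelingSum (α : ℝ) {c : ℝ} (hc : 0 < c) :
    Summable fun q : ℕ ↦ ((2 : ℝ) ^ (1 + α)) ^ (q + 1) * exp (-c * 4 ^ q) := by
  simpa only [pow_succ', mul_assoc] using
    (summable_pow_mul_exp_neg_mul_four_pow ((2 : ℝ) ^ (1 + α)) hc).mul_left ((2 : ℝ) ^ (1 + α))

lemma dyadicPeelingSum_nonneg (α c : ℝ) : 0 ≤ dyadicPeelingSum α c :=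
  tsum_nonneg fun q ↦ by positivity

lemma two_pow_succ_mul_mul_rpow {δ : ℝ} (hδ : 0 < δ) (α : ℝ) (q : ℕ) :
    2 ^ (q + 1) * δ * (2 ^ (q + 1) * δ) ^ α = ((2 : ℝ) ^ (1 + α)) ^ (q + 1) * δ ^ (1 + α) := by
  rw [rpow_pow_comm zero_le_two, ← mul_rpow (by positivity) hδ.le, rpow_add (by positivity),
    rpow_one]

section Peeling

variable {Ω : Type*} [MeasurableSpace Ω] {μ : Measure Ω}

lemma lintegral_le_add_tsum_mul_measure {ι : Type*} [Countable ι] {f : Ω → ℝ≥0∞}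
    {s₀ : Set Ω} {s : ι → Set Ω} {c₀ : ℝ≥0∞} {c : ι → ℝ≥0∞}
    (hs₀ : MeasurableSet s₀) (hs : ∀ i, MeasurableSet (s i))
    (hcover : ∀ ω, f ω ≠ 0 → (ω ∈ s₀ ∧ f ω ≤ c₀) ∨ ∃ i, ω ∈ s i ∧ f ω ≤ c i) :
    ∫⁻ ω, f ω ∂μ ≤ c₀ * μ s₀ + ∑' i, c i * μ (s i) := by
  have hpoint : ∀ ω,
      f ω ≤ s₀.indicator (fun _ ↦ c₀) ω + ∑' i, (s i).indicator (fun _ ↦ c i) ω := by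
    intro ω
    rcases eq_or_ne (f ω) 0 with h0 | h0
    · simp [h0]
    rcases hcover ω h0 with ⟨hω, hf⟩ | ⟨i, hω, hf⟩
    · exact le_add_right (by rwa [indicator_of_mem hω])
    · refine le_add_left (hf.trans ?_)
      exact (indicator_of_mem hω (fun _ ↦ c i)).symm.le.trans (ENNReal.le_tsum i)
  calc ∫⁻ ω, f ω ∂μ
      ≤ ∫⁻ ω, (s₀.indicator (fun _ ↦ c₀) ω + ∑' i, (s i).indicator (fun _ ↦ c i) ω) ∂μ :=
        lintegral_mono hpoint
    _ = c₀ * μ s₀ + ∑' i, c i * μ (s i) := by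
        rw [lintegral_add_left (measurable_const.indicator hs₀), lintegral_indicator_const hs₀,
          lintegral_tsum fun i ↦ (measurable_const.indicator (hs i)).aemeasurable]
        simp_rw [lintegral_indicator_const (hs _)]

lemma lintegral_ofReal_mul_ite_le_le_add_tsum {Z W : Ω → ℝ} (hZ : Measurable Z)
    (hW : Measurable W) {δ : ℝ} (hδ : 0 < δ) :
    ∫⁻ ω, ENNReal.ofReal (Z ω * if Z ω ≤ W ω then 1 else 0) ∂μ ≤
      ENNReal.ofReal δ * μ {ω | 0 < Z ω ∧ Z ω ≤ δ} +
        ∑' q : ℕ, ENNReal.ofReal (2 ^ (q + 1) * δ) *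
          μ {ω | 2 ^ q * δ ≤ W ω ∧ Z ω ∈ Ico (2 ^ q * δ) (2 ^ (q + 1) * δ)} := by
  refine lintegral_le_add_tsum_mul_measure (hZ measurableSet_Ioc)
    (fun q ↦ (hW measurableSet_Ici).inter (hZ measurableSet_Ico)) fun ω hω ↦ ?_
  have hzw : Z ω ≤ W ω := by by_contra h; simp [h] at hω
  have hz : 0 < Z ω := by simpa [hzw] using hω
  simp only [if_pos hzw, mul_one]
  rcases le_or_gt (Z ω) δ with hle | hlt
  · exact .inl ⟨⟨hz, hle⟩, ENNReal.ofReal_le_ofReal hle⟩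
  obtain ⟨q, hq, hq'⟩ := exists_nat_pow_near ((one_le_div hδ).2 hlt.le) one_lt_two
  rw [le_div_iff₀ hδ] at hq
  rw [div_lt_iff₀ hδ] at hq'
  exact .inr ⟨q, ⟨hq.trans hzw, hq, hq'⟩, ENNReal.ofReal_le_ofReal hq'.le⟩

lemma measure_le_and_mem_Ico_le [IsFiniteMeasure μ] {Z W : Ω → ℝ} {α C C₁ C₂ a t u : ℝ}
    (hC : 0 ≤ C) (hC₁ : 0 ≤ C₁) (ht : 0 < t) (htu : t ≤ u)
    (hmargin : ∀ t : ℝ, 0 < t → (μ {ω | 0 < Z ω ∧ Z ω ≤ t}).toReal ≤ C * t ^ α)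
    (hcond : ∀ t : ℝ, 0 < t → ∀ B : Set ℝ, MeasurableSet B →
      (μ {ω | t ≤ W ω ∧ Z ω ∈ B}).toReal ≤ C₁ * exp (-C₂ * a * t ^ 2) * (μ {ω | Z ω ∈ B}).toReal) :
    μ {ω | t ≤ W ω ∧ Z ω ∈ Ico t u} ≤
      ENNReal.ofReal (C₁ * exp (-C₂ * a * t ^ 2) * (C * u ^ α)) := by
  have hu : 0 < u := ht.trans_le htu
  have hshell : {ω | Z ω ∈ Ico t u} ⊆ {ω | 0 < Z ω ∧ Z ω ≤ u} := fun ω hω ↦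
    ⟨ht.trans_le hω.1, hω.2.le⟩
  rw [ENNReal.le_ofReal_iff_toReal_le (measure_ne_top _ _) (by positivity)]
  refine (hcond t ht _ measurableSet_Ico).trans (mul_le_mul_of_nonneg_left ?_ (by positivity))
  exact (ENNReal.toReal_mono (measure_ne_top _ _) (measure_mono hshell)).trans (hmargin u hu)

theorem lintegral_ofReal_mul_ite_le_le_mul_rpow [IsFiniteMeasure μ] {Z W : Ω → ℝ}
    (hZ : Measurable Z) (hW : Measurable W) {α C C₁ C₂ a δ : ℝ} (hC : 0 ≤ C) (hC₁ : 0 ≤ C₁)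
    (hC₂ : 0 < C₂) (hδ : 0 < δ) (haδ : a * δ ^ 2 = 1)
    (hmargin : ∀ t : ℝ, 0 < t → (μ {ω | 0 < Z ω ∧ Z ω ≤ t}).toReal ≤ C * t ^ α)
    (hcond : ∀ t : ℝ, 0 < t → ∀ B : Set ℝ, MeasurableSet B →
      (μ {ω | t ≤ W ω ∧ Z ω ∈ B}).toReal ≤ C₁ * exp (-C₂ * a * t ^ 2) * (μ {ω | Z ω ∈ B}).toReal) :
    ∫⁻ ω, ENNReal.ofReal (Z ω * if Z ω ≤ W ω then 1 else 0) ∂μ ≤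
      ENNReal.ofReal (C * (1 + C₁ * dyadicPeelingSum α C₂) * δ ^ (1 + α)) := by
  have hscale (q : ℕ) : a * (2 ^ q * δ) ^ 2 = 4 ^ q := by
    rw [mul_pow, ← pow_mul, pow_mul', show (2 : ℝ) ^ 2 = 4 by norm_num]
    linear_combination (4 : ℝ) ^ q * haδ
  calc ∫⁻ ω, ENNReal.ofReal (Z ω * if Z ω ≤ W ω then 1 else 0) ∂μ
      ≤ ENNReal.ofReal δ * ENNReal.ofReal (C * δ ^ α) +
          ∑' q : ℕ, ENNReal.ofReal (2 ^ (q + 1) * δ) * ENNReal.ofReal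
            (C₁ * exp (-C₂ * a * (2 ^ q * δ) ^ 2) * (C * (2 ^ (q + 1) * δ) ^ α)) := by
        refine (lintegral_ofReal_mul_ite_le_le_add_tsum hZ hW hδ).trans ?_
        gcongr with q
        · rw [ENNReal.le_ofReal_iff_toReal_le (measure_ne_top _ _) (by positivity)]
          exact hmargin δ hδ
        · exact measure_le_and_mem_Ico_le hC hC₁ (by positivity)
            (by gcongr <;> norm_num) hmargin hcond
    _ = ENNReal.ofReal (C * δ ^ (1 + α)) + ∑' q : ℕ, ENNReal.ofReal (C * C₁ * δ ^ (1 + α) *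
          (((2 : ℝ) ^ (1 + α)) ^ (q + 1) * exp (-C₂ * 4 ^ q))) := by
        congr 1
        · rw [← ENNReal.ofReal_mul hδ.le, rpow_add hδ, rpow_one]
          ring_nf
        · refine tsum_congr fun q ↦ ?_
          rw [← ENNReal.ofReal_mul (by positivity), mul_assoc (-C₂), hscale]
          congr 1
          linear_combination (C * C₁ * exp (-C₂ * 4 ^ q)) * two_pow_succ_mul_mul_rpow hδ α q
    _ = ENNReal.ofReal (C * (1 + C₁ * dyadicPeelingSum α C₂) * δ ^ (1 + α)) := by
        rw [← ENNReal.ofReal_tsum_of_nonneg (fun q ↦ by positivity)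
            ((summable_dyadicPeelingSum α hC₂).mul_left _), tsum_mul_left,
          ← ENNReal.ofReal_add (by positivity) (by positivity)]
        unfold dyadicPeelingSum
        ring_nf

end Peeling

/-- The conditional bound `P(W ≥ t | Z) ≤ C₁ exp(−C₂ a t²)`
a.s. is encoded by the equivalent statement over all Borel sets `B` in the range of `Z`. -/
theorem stmt6 :
    ∀ (α C C₁ C₂ : ℝ), 0 < α → 0 < C → 0 < C₁ → 0 < C₂ →
    ∃ Ct : ℝ, 0 < Ct ∧
      ∀ (Ω : Type) (_ : MeasurableSpace Ω) (μ : Measure Ω), IsProbabilityMeasure μ →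
      ∀ (Z W : Ω → ℝ) (a : ℝ), 0 < a →
      Measurable Z → Measurable W →
      (∀ ω, 0 ≤ Z ω) → (∀ ω, 0 ≤ W ω) →
      -- P(0 < Z ≤ t) ≤ C t^α
      (∀ t : ℝ, 0 < t → (μ {ω | 0 < Z ω ∧ Z ω ≤ t}).toReal ≤ C * t ^ α) →
      -- P(W ≥ t | Z) ≤ C₁ exp(−C₂ a t²) a.s.
      (∀ t : ℝ, 0 < t → ∀ B : Set ℝ, MeasurableSet B →
        (μ {ω | t ≤ W ω ∧ Z ω ∈ B}).toReal
          ≤ C₁ * Real.exp (-C₂ * a * t ^ 2) * (μ {ω | Z ω ∈ B}).toReal) →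
      ∫ ω, Z ω * (if Z ω ≤ W ω then 1 else 0) ∂μ ≤ Ct * a ^ (-(1 + α) / 2) := by
  intro α C C₁ C₂ _ hC hC₁ hC₂
  have hS := dyadicPeelingSum_nonneg α C₂
  refine ⟨C * (1 + C₁ * dyadicPeelingSum α C₂), by positivity, ?_⟩
  intro Ω _ μ _ Z W a ha hZ hW hZ0 _ hmargin hcond
  set δ := a ^ (-(1 / 2) : ℝ)
  have hδ : 0 < δ := rpow_pos_of_pos ha _
  have haδ : a * δ ^ 2 = 1 := by
    rw [← rpow_natCast, ← rpow_mul ha.le, show -(1 / 2) * ((2 : ℕ) : ℝ) = -1 by norm_num,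
      rpow_neg_one, mul_inv_cancel₀ ha.ne']
  have hδα : δ ^ (1 + α) = a ^ (-(1 + α) / 2) := by
    rw [← rpow_mul ha.le]
    ring_nf
  have hint_nonneg : 0 ≤ᵐ[μ] fun ω ↦ Z ω * if Z ω ≤ W ω then 1 else 0 :=
    ae_of_all _ fun ω ↦ mul_nonneg (hZ0 ω) (by split_ifs <;> norm_num)
  have hint_meas : Measurable fun ω ↦ Z ω * if Z ω ≤ W ω then 1 else 0 :=
    hZ.mul (Measurable.ite (measurableSet_le hZ hW) measurable_const measurable_const)
  rw [integral_eq_lintegral_of_nonneg_ae hint_nonneg hint_meas.aestronglyMeasurable, ← hδα]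
  exact ENNReal.toReal_le_of_le_ofReal (by positivity) <|
    lintegral_ofReal_mul_ite_le_le_mul_rpow hZ hW hC.le hC₁.le hC₂ hδ haδ hmargin hcond
end

section
/- Fix β ∈ [L] and x ∈ ℝ^D. Let F_β(x) = {g ∈ {0,1}^L : Σ_l g^l (1 − η^l(x)) ≤ β}. Define K(x) = max{m ∈ [L] : Σ_{l=1}^m (1 − η^{σ_l}(x)) ≤ β} (with σ sorting η(x) decreasingly), and let g* be the indicator of the top-K(x) indices. Then g* ∈ F_β(x), and for every g ∈ F_β(x), Σ_l η^l(x)·1{g^l = 0} ≥ Σ_l η^l(x)·1{g*^l = 0}. In particular the F_β-oracle classifier is the top-K(x) rule. -/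
/-!
The false-discovery cost of a selection `S` is `#S - ∑_{l ∈ S} η l` and its false-negative mass
is `∑ η - ∑_{l ∈ S} η l`, so among selections of a fixed size `m` the first `m` indices in the
order `σ` are optimal for both. Hence if `S` is feasible, so is the top-`#S` prefix, which gives
`#S ≤ K`, and the true-positive mass of `S` is at most that of the top-`K` rule.
-/

open Finset

theorem Fin.val_le_of_strictMono {m n : ℕ} {f : Fin m → Fin n} (hf : StrictMono f) (k : Fin m) :
    (k : ℕ) ≤ f k :=
  calc (k : ℕ) = #((Iio k).map ⟨f, hf.injective⟩) := by simp
    _ ≤ #(Iio (f k)) := card_le_card fun x hx => by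
        obtain ⟨i, hi, rfl⟩ := mem_map.1 hx
        exact mem_Iio.2 (hf (mem_Iio.1 hi))
    _ = f k := Fin.card_Iio _

section Prefix

variable {M : Type*} [AddCommMonoid M] [PartialOrder M] [IsOrderedAddMonoid M] {L : ℕ}

theorem Fin.sum_le_sum_prefix_of_antitone {f : Fin L → M} (hf : Antitone f)
    (S : Finset (Fin L)) : ∑ j ∈ S, f j ≤ ∑ j ∈ {j : Fin L | (j : ℕ) < #S}, f j := by
  have hS : #S ≤ L := by simpa using S.card_le_univ
  have hprefix : ({j : Fin L | (j : ℕ) < #S} : Finset (Fin L)) = univ.map (Fin.castLEEmb hS) := by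
    ext j
    simp only [mem_filter, mem_univ, true_and, mem_map, Fin.castLEEmb_apply]
    exact ⟨fun h => ⟨⟨j, h⟩, rfl⟩, by rintro ⟨k, rfl⟩; exact k.2⟩
  conv_lhs => rw [← S.map_orderEmbOfFin_univ rfl]
  rw [hprefix, sum_map, sum_map]
  exact sum_le_sum fun k _ => hf (Fin.val_le_of_strictMono (S.orderEmbOfFin rfl).strictMono k)

theorem Fin.sum_le_sum_prefix_comp_perm {f : Fin L → M} {σ : Equiv.Perm (Fin L)}
    (hf : Antitone (f ∘ σ)) (S : Finset (Fin L)) :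
    ∑ l ∈ S, f l ≤ ∑ j ∈ {j : Fin L | (j : ℕ) < #S}, f (σ j) := by
  simpa [sum_map] using Fin.sum_le_sum_prefix_of_antitone hf (S.map σ.symm.toEmbedding)

end Prefix

theorem Fin.sum_prefix_one_sub_le {L : ℕ} {η : Fin L → ℝ} {σ : Equiv.Perm (Fin L)}
    (hη : Antitone (η ∘ σ)) (S : Finset (Fin L)) :
    ∑ j ∈ {j : Fin L | (j : ℕ) < #S}, (1 - η (σ j)) ≤ ∑ l ∈ S, (1 - η l) := by
  have hS : #S ≤ L := by simpa using S.card_le_univ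
  simp only [sum_sub_distrib, Finset.sum_const, Fin.card_filter_val_lt, min_eq_right hS,
    nsmul_eq_mul, mul_one]
  linarith [Fin.sum_le_sum_prefix_comp_perm hη S]

theorem Fin.sum_ite_eq_sum_prefix {M : Type*} [AddCommMonoid M] {L K : ℕ}
    {σ : Equiv.Perm (Fin L)} {g : Fin L → Bool}
    (hg : ∀ l, g l = decide ((σ.symm l : ℕ) < K)) (F : Fin L → M) :
    ∑ l, (if g l = true then F l else 0) = ∑ j ∈ {j : Fin L | (j : ℕ) < K}, F (σ j) := by
  rw [← Equiv.sum_comp σ, sum_filter]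
  simp [hg]

theorem Fintype.sum_ite_false_eq_sub {ι G : Type*} [Fintype ι] [AddCommGroup G]
    (g : ι → Bool) (f : ι → G) :
    ∑ i, (if g i = false then f i else 0) =
      ∑ i, f i - ∑ i, (if g i = true then f i else 0) := by
  rw [eq_sub_iff_add_eq, ← Finset.sum_add_distrib]
  exact Finset.sum_congr rfl fun i _ => by cases g i <;> simp

theorem stmt7_general (L β : ℕ)
    (η : Fin L → ℝ) (hη : ∀ l, 0 ≤ η l ∧ η l ≤ 1)
    (σ : Equiv.Perm (Fin L)) (hσ : ∀ i j : Fin L, i ≤ j → η (σ j) ≤ η (σ i))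
    -- K is the largest m ≤ L with ∑_{j<m} (1 − η(σ_j)) ≤ β
    (K : ℕ)
    (hKfeas : ∑ j ∈ Finset.univ.filter (fun j : Fin L => (j : ℕ) < K), (1 - η (σ j)) ≤ (β : ℝ))
    (hKmax : ∀ m, m ≤ L →
      (∑ j ∈ Finset.univ.filter (fun j : Fin L => (j : ℕ) < m), (1 - η (σ j))) ≤ (β : ℝ) → m ≤ K)
    -- g* is the indicator of the top-K indices
    (gstar : Fin L → Bool) (hgstar : ∀ l, gstar l = decide ((σ.symm l : ℕ) < K)) :
    (∑ l, (if gstar l = true then 1 - η l else 0)) ≤ (β : ℝ) ∧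
    ∀ g : Fin L → Bool, (∑ l, (if g l = true then 1 - η l else 0)) ≤ (β : ℝ) →
      (∑ l, (if gstar l = false then η l else 0)) ≤ ∑ l, (if g l = false then η l else 0) := by
  have hanti : Antitone (η ∘ σ) := fun i j hij => hσ i j hij
  have hstar := Fin.sum_ite_eq_sum_prefix (M := ℝ) hgstar
  refine ⟨by rwa [hstar], fun g hg => ?_⟩
  set S : Finset (Fin L) := {l | g l = true}
  rw [← sum_filter] at hg
  have hSK : #S ≤ K :=
    hKmax _ (by simpa using S.card_le_univ) ((Fin.sum_prefix_one_sub_le hanti S).trans hg)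
  rw [Fintype.sum_ite_false_eq_sub, Fintype.sum_ite_false_eq_sub, hstar, sub_le_sub_iff_left,
    ← sum_filter]
  calc ∑ l ∈ S, η l ≤ ∑ j ∈ {j : Fin L | (j : ℕ) < #S}, η (σ j) :=
        Fin.sum_le_sum_prefix_comp_perm hanti S
    _ ≤ ∑ j ∈ {j : Fin L | (j : ℕ) < K}, η (σ j) :=
        sum_le_sum_of_subset_of_nonneg (monotone_filter_right _ fun _ _ hj => hj.trans_le hSK)
          fun j _ _ => (hη _).1

/-- the F_β-oracle is the top-K(x) rule, where
`K(x) = max{m ∈ [L] : ∑_{l=1}^m (1 − η^{σ_l}(x)) ≤ β}`. -/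
theorem stmt7 (L β : ℕ) (hβ1 : 1 ≤ β) (hβL : β ≤ L)
    (η : Fin L → ℝ) (hη : ∀ l, 0 ≤ η l ∧ η l ≤ 1)
    (σ : Equiv.Perm (Fin L)) (hσ : ∀ i j : Fin L, i ≤ j → η (σ j) ≤ η (σ i))
    -- K is the largest m ≤ L with ∑_{j<m} (1 − η(σ_j)) ≤ β
    (K : ℕ) (hKL : K ≤ L)
    (hKfeas : ∑ j ∈ Finset.univ.filter (fun j : Fin L => (j : ℕ) < K), (1 - η (σ j)) ≤ (β : ℝ))
    (hKmax : ∀ m, m ≤ L →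
      (∑ j ∈ Finset.univ.filter (fun j : Fin L => (j : ℕ) < m), (1 - η (σ j))) ≤ (β : ℝ) → m ≤ K)
    -- g* is the indicator of the top-K indices
    (gstar : Fin L → Bool) (hgstar : ∀ l, gstar l = decide ((σ.symm l : ℕ) < K)) :
    (∑ l, (if gstar l = true then 1 - η l else 0)) ≤ (β : ℝ) ∧
    ∀ g : Fin L → Bool, (∑ l, (if g l = true then 1 - η l else 0)) ≤ (β : ℝ) →
      (∑ l, (if gstar l = false then η l else 0)) ≤ ∑ l, (if g l = false then η l else 0) :=
  stmt7_general L β η hη σ hσ K hKfeas hKmax gstar hgstar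
end

section
/- Fix x, k, and suppose {σ̂_1,…,σ̂_{l'}} ⊆ {σ_1,…,σ_k} for some l' ≤ k, where σ sorts η(x) decreasingly. If K(x) = k, i.e. Σ_{j=1}^k (1 − η^{σ_j}(x)) ≤ β, and the plug-in rule rejects σ̂-rank l', i.e. Σ_{j=1}^{l'} (1 − η̂^{σ̂_j}(x)) > β, then l'·‖η(x) − η̂(x)‖_∞ ≥ |Σ_{j=k−l'+1}^{k} (1 − η^{σ_j}(x)) − β|. (The sum of the l' largest of (1−η^{σ_j}(x)) over j ≤ k dominates any sum of l' such terms indexed in the top-k set.) -/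
/-!
Move the plug-in rejection to the true regression function: each of the `l'` terms changes by at
most `‖η − η̂‖_∞`, so `β < ∑_{j ≤ l'} (1 − η^{σ̂_j}) + l'‖η − η̂‖_∞`. The labels `σ̂_1, …, σ̂_{l'}`
occupy `l'` of the top-`k` σ-ranks, and since `1 − η^{σ_j}` increases with the rank `j`, their
contribution is at most that of the last `l'` ranks `k − l' + 1, …, k`. That window sum is at most
the full top-`k` sum, hence at most `β`; so it lies in `(β − l'‖η − η̂‖_∞, β]`.
-/

open Finset

namespace Finset

theorem sum_le_sum_of_card_eq_of_sdiff_le {ι M : Type*} [DecidableEq ι] [AddCommMonoid M]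
    [LinearOrder M] [IsOrderedAddMonoid M] {s t : Finset ι} {f : ι → M} (hst : #s = #t)
    (h : ∀ i ∈ s \ t, ∀ j ∈ t \ s, f i ≤ f j) : ∑ i ∈ s, f i ≤ ∑ i ∈ t, f i := by
  have hcard := card_sdiff_comm hst
  obtain ⟨c, hs, ht⟩ : ∃ c, (∀ i ∈ s \ t, f i ≤ c) ∧ ∀ j ∈ t \ s, c ≤ f j := by
    rcases (s \ t).eq_empty_or_nonempty with hempty | hne
    · have : t \ s = ∅ := card_eq_zero.mp (by rw [← hcard, hempty, card_empty])
      exact ⟨0, by simp [hempty], by simp [this]⟩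
    · exact ⟨(s \ t).sup' hne f, fun i hi => le_sup' f hi,
        fun j hj => sup'_le hne f fun i hi => h i hi j hj⟩
  rw [← sum_inter_add_sum_sdiff s t, ← sum_inter_add_sum_sdiff t s, inter_comm]
  refine add_le_add le_rfl ?_
  calc ∑ i ∈ s \ t, f i ≤ #(s \ t) • c := sum_le_card_nsmul _ _ _ hs
    _ = #(t \ s) • c := by rw [hcard]
    _ ≤ ∑ j ∈ t \ s, f j := card_nsmul_le_sum _ _ _ ht

theorem sum_le_sum_add_card_nsmul {ι M : Type*} [AddCommGroup M] [PartialOrder M]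
    [IsOrderedAddMonoid M] {s : Finset ι} {f g : ι → M} {c : M} (h : ∀ i ∈ s, f i - g i ≤ c) :
    ∑ i ∈ s, f i ≤ ∑ i ∈ s, g i + #s • c :=
  sub_le_iff_le_add'.mp (sum_sub_distrib f g ▸ sum_le_card_nsmul s _ c h)

end Finset

namespace Fin

theorem card_filter_sub_le_val_lt {L k l : ℕ} (hlk : l ≤ k) (hkL : k ≤ L) :
    #{j : Fin L | k - l ≤ (j : ℕ) ∧ (j : ℕ) < k} = l := by
  have hwindow : univ.filter (fun j : Fin L => k - l ≤ (j : ℕ) ∧ (j : ℕ) < k) =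
      univ.filter (fun j : Fin L => (j : ℕ) < k) \
        univ.filter (fun j : Fin L => (j : ℕ) < k - l) := by
    ext j
    simp only [mem_filter, mem_univ, true_and, mem_sdiff]
    omega
  have hsub : univ.filter (fun j : Fin L => (j : ℕ) < k - l) ⊆ univ.filter fun j => (j : ℕ) < k :=
    monotone_filter_right _ fun _ _ h => by omega
  rw [hwindow, card_sdiff_of_subset hsub, card_filter_val_lt, card_filter_val_lt]
  omega

theorem sum_le_sum_filter_sub_le_val_lt {L k l : ℕ} {M : Type*} [AddCommMonoid M] [LinearOrder M]
    [IsOrderedAddMonoid M] {f : Fin L → M} (hf : Monotone f) {s : Finset (Fin L)}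
    (hsk : ∀ i ∈ s, (i : ℕ) < k) (hs : #s = l) (hlk : l ≤ k) (hkL : k ≤ L) :
    ∑ i ∈ s, f i ≤ ∑ j ∈ univ.filter (fun j : Fin L => k - l ≤ (j : ℕ) ∧ (j : ℕ) < k), f j := by
  refine sum_le_sum_of_card_eq_of_sdiff_le (by rw [hs, card_filter_sub_le_val_lt hlk hkL]) ?_
  intro i hi j hj
  simp only [mem_sdiff, mem_filter, mem_univ, true_and] at hi hj
  have hik := hsk i hi.1
  exact hf (Fin.le_def.mpr (by omega))

end Fin

theorem stmt12_general (L β : ℕ) (hL : 0 < L)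
    (η ηh : Fin L → ℝ)
    (hη : ∀ l, 0 ≤ η l ∧ η l ≤ 1)
    (σ τ : Equiv.Perm (Fin L))
    (hσ : ∀ i j : Fin L, i ≤ j → η (σ j) ≤ η (σ i))
    (k l' : ℕ) (hl'k : l' ≤ k) (hkL : k ≤ L)
    (hsub : Finset.image (fun j => τ j) (Finset.univ.filter fun j : Fin L => (j : ℕ) < l')
      ⊆ Finset.image (fun j => σ j) (Finset.univ.filter fun j : Fin L => (j : ℕ) < k))
    (hfeas : ∑ j ∈ Finset.univ.filter (fun j : Fin L => (j : ℕ) < k), (1 - η (σ j)) ≤ (β : ℝ))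
    (hrej : (β : ℝ) < ∑ j ∈ Finset.univ.filter (fun j : Fin L => (j : ℕ) < l'), (1 - ηh (τ j))) :
    |(∑ j ∈ Finset.univ.filter (fun j : Fin L => k - l' ≤ (j : ℕ) ∧ (j : ℕ) < k),
        (1 - η (σ j))) - (β : ℝ)|
      ≤ (l' : ℝ) * Finset.univ.sup' ⟨⟨0, hL⟩, Finset.mem_univ _⟩ (fun i => |η i - ηh i|) := by
  set ε := univ.sup' ⟨⟨0, hL⟩, mem_univ _⟩ (fun i => |η i - ηh i|)
  set top : Finset (Fin L) := univ.filter fun j : Fin L => (j : ℕ) < l'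
  set window : Finset (Fin L) := univ.filter fun j : Fin L => k - l' ≤ (j : ℕ) ∧ (j : ℕ) < k
  -- the σ-ranks of the labels `τ 0, …, τ (l' - 1)`
  set ranks := top.map (τ.trans σ.symm).toEmbedding
  have hmono : Monotone fun j => 1 - η (σ j) := fun i j hij => sub_le_sub_left (hσ i j hij) 1
  have htop : #top = l' := by
    rw [Fin.card_filter_val_lt]
    omega
  have hranks : ∀ i ∈ ranks, (i : ℕ) < k := by
    intro i hi
    obtain ⟨j, hj, rfl⟩ := mem_map.mp hi
    obtain ⟨m, hm, hσm⟩ := mem_image.mp (hsub (mem_image_of_mem _ hj))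
    simpa [← hσm] using (mem_filter.mp hm).2
  have hplugin : ∑ j ∈ top, (1 - ηh (τ j)) ≤ ∑ j ∈ top, (1 - η (τ j)) + l' * ε := by
    rw [← htop, ← nsmul_eq_mul]
    refine sum_le_sum_add_card_nsmul fun j _ => ?_
    have := le_sup' (fun i => |η i - ηh i|) (mem_univ (τ j))
    rw [abs_le] at this
    linarith
  have hranks_sum : ∑ j ∈ ranks, (1 - η (σ j)) = ∑ j ∈ top, (1 - η (τ j)) := by simp [ranks]
  have hwindow : ∑ j ∈ window, (1 - η (σ j)) ≤ β :=
    le_trans (sum_le_sum_of_subset_of_nonneg (monotone_filter_right _ fun _ _ h => h.2)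
      fun j _ _ => by linarith [(hη (σ j)).2]) hfeas
  have hranks_window := Fin.sum_le_sum_filter_sub_le_val_lt hmono hranks
    (by rw [card_map, htop]) hl'k hkL
  rw [abs_of_nonpos (by linarith)]
  linarith

/-- if `{σ̂_1,…,σ̂_{l'}} ⊆ {σ_1,…,σ_k}`, the budget is met at rank k
(`∑_{j=1}^k (1−η^{σ_j}) ≤ β`) but the plug-in rule rejects σ̂-rank l'
(`∑_{j=1}^{l'} (1−η̂^{σ̂_j}) > β`), then
`l'·‖η−η̂‖_∞ ≥ |∑_{j=k−l'+1}^{k} (1−η^{σ_j}) − β|`. -/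
theorem stmt12 (L β : ℕ) (hL : 0 < L) (hβ1 : 1 ≤ β) (hβL : β ≤ L)
    (η ηh : Fin L → ℝ)
    (hη : ∀ l, 0 ≤ η l ∧ η l ≤ 1) (hηh : ∀ l, 0 ≤ ηh l ∧ ηh l ≤ 1)
    (σ τ : Equiv.Perm (Fin L))
    (hσ : ∀ i j : Fin L, i ≤ j → η (σ j) ≤ η (σ i))
    (hτ : ∀ i j : Fin L, i ≤ j → ηh (τ j) ≤ ηh (τ i))
    (k l' : ℕ) (hl'1 : 1 ≤ l') (hl'k : l' ≤ k) (hkL : k ≤ L)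
    (hsub : Finset.image (fun j => τ j) (Finset.univ.filter fun j : Fin L => (j : ℕ) < l')
      ⊆ Finset.image (fun j => σ j) (Finset.univ.filter fun j : Fin L => (j : ℕ) < k))
    (hfeas : ∑ j ∈ Finset.univ.filter (fun j : Fin L => (j : ℕ) < k), (1 - η (σ j)) ≤ (β : ℝ))
    (hrej : (β : ℝ) < ∑ j ∈ Finset.univ.filter (fun j : Fin L => (j : ℕ) < l'), (1 - ηh (τ j))) :
    |(∑ j ∈ Finset.univ.filter (fun j : Fin L => k - l' ≤ (j : ℕ) ∧ (j : ℕ) < k),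
        (1 - η (σ j))) - (β : ℝ)|
      ≤ (l' : ℝ) * Finset.univ.sup' ⟨⟨0, hL⟩, Finset.mem_univ _⟩ (fun i => |η i - ηh i|) :=
  stmt12_general L β hL η ηh hη σ τ hσ k l' hl'k hkL hsub hfeas hrej
end

section
/- Fix K, β ∈ [L] and x ∈ ℝ^D. Over the class F_β(x) ∩ {g ∈ {0,1}^L : ‖g‖₀ ≤ K}, the conditional false-negative risk Σ_l η^l(x)1{g^l=0} is minimized by the top-K⋆(x) rule, where K⋆(x) = min(K, max{m ∈ [L] : Σ_{l=1}^m (1 − η^{σ_l}(x)) ≤ β}). -/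
/-!
Every competing rule `g` uses at most `K⋆` labels: it uses at most `K` by assumption, and the
`‖g‖₀` labels it uses cost at least as much false-positive budget as the top `‖g‖₀` labels, so
`‖g‖₀ ≤ K_β` by maximality of `K_β`. Among sets of at most `K⋆` labels, the top-`K⋆` set has the
largest total `η` by an exchange argument, i.e. the smallest false-negative risk.
-/

open Finset

section Exchange

variable {ι M : Type*} [DecidableEq ι] [AddCommMonoid M] [LinearOrder M] [IsOrderedAddMonoid M]

/-- Exchange argument: the extra elements of `S` weigh at most the minimum of the (at least as
many, nonnegative) extra elements of `T`. -/
theorem sum_le_sum_of_card_le_of_forall_le {w : ι → M} {S T : Finset ι}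
    (hw : ∀ a ∈ T, 0 ≤ w a) (hcard : #S ≤ #T) (hsep : ∀ a ∈ T, ∀ b ∉ T, w b ≤ w a) :
    ∑ i ∈ S, w i ≤ ∑ i ∈ T, w i := by
  rw [← sum_inter_add_sum_sdiff S T, ← sum_inter_add_sum_sdiff T S, inter_comm T S]
  refine add_le_add le_rfl ?_
  have hcard' : #(S \ T) ≤ #(T \ S) := card_sdiff_le_card_sdiff_iff.2 hcard
  rcases (T \ S).eq_empty_or_nonempty with hTS | hTS
  · rw [hTS, card_empty, Nat.le_zero, card_eq_zero] at hcard'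
    rw [hTS, hcard']
  · calc ∑ i ∈ S \ T, w i ≤ #(S \ T) • (T \ S).inf' hTS w :=
          sum_le_card_nsmul _ _ _ fun b hb =>
            le_inf' _ _ fun a ha => hsep a (mem_sdiff.1 ha).1 b (mem_sdiff.1 hb).2
      _ ≤ #(T \ S) • (T \ S).inf' hTS w :=
          nsmul_le_nsmul_left (le_inf' _ _ fun a ha => hw a (mem_sdiff.1 ha).1) hcard'
      _ ≤ ∑ i ∈ T \ S, w i := card_nsmul_le_sum _ _ _ fun a ha => inf'_le _ ha

end Exchange

section TopSet

variable {L : ℕ} (σ : Equiv.Perm (Fin L))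

/-- Indices are 0-based: the paper's `σ_1, …, σ_m` are `σ 0, …, σ (m - 1)` here. -/
def topSet (m : ℕ) : Finset (Fin L) :=
  (univ.filter fun j : Fin L => (j : ℕ) < m).map σ.toEmbedding

theorem mem_topSet {m : ℕ} {l : Fin L} : l ∈ topSet σ m ↔ (σ.symm l : ℕ) < m := by
  simp [topSet, mem_map_equiv]

theorem sum_topSet {M : Type*} [AddCommMonoid M] (f : Fin L → M) (m : ℕ) :
    ∑ l ∈ topSet σ m, f l = ∑ j ∈ univ.filter (fun j : Fin L => (j : ℕ) < m), f (σ j) :=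
  sum_map _ _ _

theorem card_topSet (m : ℕ) : #(topSet σ m) = min L m := by
  rw [topSet, card_map, Fin.card_filter_val_lt]

theorem topSet_mono : Monotone (topSet σ) := fun _ _ hmn _ hl =>
  (mem_topSet σ).2 (((mem_topSet σ).1 hl).trans_le hmn)

variable {σ} {η : Fin L → ℝ}

theorem le_of_mem_topSet_of_notMem (hσ : Antitone (η ∘ σ)) {m : ℕ} {a b : Fin L}
    (ha : a ∈ topSet σ m) (hb : b ∉ topSet σ m) : η b ≤ η a := by
  rw [mem_topSet] at ha hb
  simpa using hσ (show σ.symm a ≤ σ.symm b from Fin.le_def.2 (by omega))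

theorem sum_le_sum_topSet (hη : ∀ l, 0 ≤ η l) (hσ : Antitone (η ∘ σ)) {S : Finset (Fin L)}
    {m : ℕ} (hS : #S ≤ m) : ∑ l ∈ S, η l ≤ ∑ l ∈ topSet σ m, η l := by
  refine sum_le_sum_of_card_le_of_forall_le (fun l _ => hη l) ?_
    fun a ha b hb => le_of_mem_topSet_of_notMem hσ ha hb
  rw [card_topSet]
  exact le_min (card_le_univ S |>.trans_eq (Fintype.card_fin L)) hS

theorem sum_topSet_one_sub_le (hη : ∀ l, 0 ≤ η l) (hσ : Antitone (η ∘ σ))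
    (S : Finset (Fin L)) : ∑ l ∈ topSet σ #S, (1 - η l) ≤ ∑ l ∈ S, (1 - η l) := by
  have hcard : #(topSet σ #S) = #S := by
    rw [card_topSet, min_eq_right (card_le_univ S |>.trans_eq (Fintype.card_fin L))]
  simp only [sum_sub_distrib, sum_const, hcard]
  exact sub_le_sub_left (sum_le_sum_topSet hη hσ le_rfl) _

end TopSet

theorem sum_ite_eq_false_eq_sub {ι M : Type*} [Fintype ι] [AddCommGroup M] (g : ι → Bool)
    (f : ι → M) :
    ∑ l, (if g l = false then f l else 0) =
      ∑ l, f l - ∑ l ∈ univ.filter (fun l => g l = true), f l := by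
  rw [eq_sub_iff_add_eq, ← sum_filter, ← sum_filter_add_sum_filter_not univ (fun l => g l = true)]
  simp only [Bool.not_eq_true, add_comm]

theorem stmt17_general (L β K : ℕ)
    (η : Fin L → ℝ) (hη : ∀ l, 0 ≤ η l ∧ η l ≤ 1)
    (σ : Equiv.Perm (Fin L)) (hσ : ∀ i j : Fin L, i ≤ j → η (σ j) ≤ η (σ i))
    -- Kb = max{m ∈ [L] : ∑_{j<m} (1 − η(σ_j)) ≤ β}
    (Kb : ℕ)
    (hKbfeas : ∑ j ∈ Finset.univ.filter (fun j : Fin L => (j : ℕ) < Kb), (1 - η (σ j)) ≤ (β : ℝ))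
    (hKbmax : ∀ m, m ≤ L →
      (∑ j ∈ Finset.univ.filter (fun j : Fin L => (j : ℕ) < m), (1 - η (σ j))) ≤ (β : ℝ) →
      m ≤ Kb)
    (Ks : ℕ) (hKs : Ks = min K Kb)
    (gstar : Fin L → Bool) (hgstar : ∀ l, gstar l = decide ((σ.symm l : ℕ) < Ks)) :
    ((∑ l, (if gstar l = true then 1 - η l else 0)) ≤ (β : ℝ) ∧
      (Finset.univ.filter (fun l => gstar l = true)).card ≤ K) ∧
    ∀ g : Fin L → Bool,
      (∑ l, (if g l = true then 1 - η l else 0)) ≤ (β : ℝ) →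
      (Finset.univ.filter (fun l => g l = true)).card ≤ K →
      (∑ l, (if gstar l = false then η l else 0)) ≤ ∑ l, (if g l = false then η l else 0) := by
  have hη₀ : ∀ l, 0 ≤ η l := fun l => (hη l).1
  have hgstar_eq : univ.filter (fun l => gstar l = true) = topSet σ Ks := by
    ext l; simp [hgstar, mem_topSet]
  refine ⟨⟨?_, ?_⟩, fun g hg hgK => ?_⟩
  · rw [← sum_filter, hgstar_eq]
    calc ∑ l ∈ topSet σ Ks, (1 - η l) ≤ ∑ l ∈ topSet σ Kb, (1 - η l) :=
          sum_le_sum_of_subset_of_nonneg (topSet_mono σ (hKs ▸ min_le_right K Kb))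
            fun l _ _ => sub_nonneg.2 (hη l).2
      _ ≤ β := by rwa [sum_topSet]
  · rw [hgstar_eq, card_topSet]
    omega
  · set S := univ.filter (fun l => g l = true)
    have hSKb : #S ≤ Kb := by
      refine hKbmax #S (card_le_univ S |>.trans_eq (Fintype.card_fin L)) ?_
      rw [← sum_topSet σ (fun l => 1 - η l)]
      exact (sum_topSet_one_sub_le hη₀ hσ S).trans (by rwa [sum_filter])
    rw [sum_ite_eq_false_eq_sub, sum_ite_eq_false_eq_sub, hgstar_eq]
    exact sub_le_sub_left (sum_le_sum_topSet hη₀ hσ (hKs ▸ le_min hgK hSKb)) _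

/-- over the intersection class F_β(x) ∩ {‖g‖₀ ≤ K}, the conditional
false-negative risk is minimized by the top-K⋆(x) rule with
`K⋆ = min(K, max{m ∈ [L] : ∑_{l=1}^m (1 − η^{σ_l}) ≤ β})`. -/
theorem stmt17 (L β K : ℕ) (hβ1 : 1 ≤ β) (hβL : β ≤ L) (hK1 : 1 ≤ K) (hKL : K ≤ L)
    (η : Fin L → ℝ) (hη : ∀ l, 0 ≤ η l ∧ η l ≤ 1)
    (σ : Equiv.Perm (Fin L)) (hσ : ∀ i j : Fin L, i ≤ j → η (σ j) ≤ η (σ i))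
    -- Kb = max{m ∈ [L] : ∑_{j<m} (1 − η(σ_j)) ≤ β}
    (Kb : ℕ) (hKbL : Kb ≤ L)
    (hKbfeas : ∑ j ∈ Finset.univ.filter (fun j : Fin L => (j : ℕ) < Kb), (1 - η (σ j)) ≤ (β : ℝ))
    (hKbmax : ∀ m, m ≤ L →
      (∑ j ∈ Finset.univ.filter (fun j : Fin L => (j : ℕ) < m), (1 - η (σ j))) ≤ (β : ℝ) →
      m ≤ Kb)
    (Ks : ℕ) (hKs : Ks = min K Kb)
    (gstar : Fin L → Bool) (hgstar : ∀ l, gstar l = decide ((σ.symm l : ℕ) < Ks)) :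
    ((∑ l, (if gstar l = true then 1 - η l else 0)) ≤ (β : ℝ) ∧
      (Finset.univ.filter (fun l => gstar l = true)).card ≤ K) ∧
    ∀ g : Fin L → Bool,
      (∑ l, (if g l = true then 1 - η l else 0)) ≤ (β : ℝ) →
      (Finset.univ.filter (fun l => g l = true)).card ≤ K →
      (∑ l, (if gstar l = false then η l else 0)) ≤ ∑ l, (if g l = false then η l else 0) :=
  stmt17_general L β K η hη σ hσ Kb hKbfeas hKbmax Ks hKs gstar hgstar
end
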